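/- Time averages of the price-adjustment dynamics satisfy the bicausal equilibrium model: Suppose −1 < λ(β^d − β^s) < 0. Then for any initial state, the Cesàro time averages P̄_n = (1/n) Σ_{k=0}^{n−1} p_k, Q̄^d_n = (1/n) Σ_{k=0}^{n−1} q^d_k, Q̄^s_n = (1/n) Σ_{k=0}^{n−1} q^s_k converge as n → ∞ to limits P̄, Q̄^d, Q̄^s that satisfy the structural equations Q̄^d = α^d + β^d P̄ + ε^d and Q̄^s = α^s + β^s P̄ + ε^s together with the equilibrium condition Q̄^d = Q̄^s. -/

import Mathlib

open Filter Topology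

/-!
Let `P` be the equilibrium price. Eliminating the quantities, the deviation `e k = p k - P`
satisfies `e (k + 2) = e (k + 1) - ν * e k` with `ν = -λ(β^d - β^s) ∈ (0, 1)`. Both roots of
`x² - x + ν` lie in the open unit disc: a real root has `r (1 - r) = ν > 0`, so `r ∈ (0, 1)`,
and a non-real pair has `|r|² = ν`. Hence `e k → 0`, so `p`, `q^d`, `q^s` converge to the
equilibrium values, and so do their Cesàro averages.
-/

theorem exists_mul_one_sub_eq_of_norm_lt_one {ν : ℝ} (h0 : 0 < ν) (h1 : ν < 1) :
    ∃ r : ℂ, r * (1 - r) = ν ∧ ‖r‖ < 1 ∧ ‖1 - r‖ < 1 := by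
  obtain ⟨s, hs⟩ := IsAlgClosed.exists_eq_mul_self (1 - 4 * (ν : ℂ))
  obtain ⟨r, rfl⟩ : ∃ r, s = 2 * r - 1 := ⟨(s + 1) / 2, by ring⟩
  have hr : r * (1 - r) = ν := by linear_combination (1 / 4 : ℂ) * hs
  refine ⟨r, hr, ?_⟩
  have hre : r.re * (1 - r.re) + r.im * r.im = ν := by simpa using congrArg Complex.re hr
  have him : r.im * (1 - 2 * r.re) = 0 := by
    have := congrArg Complex.im hr
    simp only [Complex.mul_im, Complex.sub_im, Complex.one_im, zero_sub, mul_neg, Complex.sub_re,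
      Complex.one_re, Complex.ofReal_im] at this
    linear_combination this
  rw [← sq_lt_one_iff₀ (norm_nonneg _), ← sq_lt_one_iff₀ (norm_nonneg _),
    Complex.sq_norm, Complex.sq_norm, Complex.normSq_apply, Complex.normSq_apply]
  simp only [Complex.sub_re, Complex.one_re, Complex.sub_im, Complex.one_im]
  rcases mul_eq_zero.1 him with hb | ha
  · rw [hb] at hre ⊢
    constructor <;> nlinarith
  · have : r.re = 1 / 2 := by linarith
    rw [this] at hre ⊢
    constructor <;> nlinarith

theorem tendsto_zero_of_succ_eq_mul_add_mul_pow {𝕜 : Type*} [NormedDivisionRing 𝕜]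
    {r s c : 𝕜} (hr : ‖r‖ < 1) (hs : ‖s‖ < 1) {E : ℕ → 𝕜}
    (hE : ∀ k, E (k + 1) = s * E k + r ^ k * c) :
    Tendsto E atTop (𝓝 0) := by
  set ρ := max ‖r‖ ‖s‖
  have hρ0 : 0 ≤ ρ := le_max_of_le_left (norm_nonneg r)
  have hρ1 : ρ < 1 := max_lt hr hs
  have hbound : ∀ n, ‖E (n + 1)‖ ≤ ρ ^ (n + 1) * ‖E 0‖ + (n + 1) * ρ ^ n * ‖c‖ := by
    intro n
    induction n with
    | zero =>
      calc ‖E (0 + 1)‖ ≤ ‖s‖ * ‖E 0‖ + ‖c‖ := by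
            rw [hE]; simpa using norm_add_le (s * E 0) c
        _ ≤ _ := by
            simp only [zero_add, pow_one, CharP.cast_eq_zero, pow_zero, mul_one, one_mul,
              add_le_add_iff_right]
            gcongr
            exact le_max_right _ _
    | succ n ih =>
      calc ‖E (n + 1 + 1)‖ ≤ ‖s‖ * ‖E (n + 1)‖ + ‖r‖ ^ (n + 1) * ‖c‖ := by
            rw [hE, ← norm_pow, ← norm_mul, ← norm_mul]; exact norm_add_le _ _
        _ ≤ ρ * (ρ ^ (n + 1) * ‖E 0‖ + (n + 1) * ρ ^ n * ‖c‖) + ρ ^ (n + 1) * ‖c‖ := by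
            gcongr
            · exact le_max_right _ _
            · exact le_max_left _ _
        _ = ρ ^ (n + 1 + 1) * ‖E 0‖ + ((n + 1 : ℕ) + 1) * ρ ^ (n + 1) * ‖c‖ := by
            push_cast; ring
  have hgeom := tendsto_pow_atTop_nhds_zero_of_lt_one hρ0 hρ1
  have hlim : Tendsto (fun n : ℕ => ρ ^ (n + 1) * ‖E 0‖ + (n + 1) * ρ ^ n * ‖c‖)
      atTop (𝓝 0) := by
    have := ((hgeom.const_mul ρ).mul_const ‖E 0‖).add
      (((tendsto_self_mul_const_pow_of_lt_one hρ0 hρ1).add hgeom).mul_const ‖c‖)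
    simp only [mul_zero, zero_mul, add_zero] at this
    convert this using 2 with n
    ring
  rw [← tendsto_add_atTop_iff_nat 1]
  exact squeeze_zero_norm hbound hlim

theorem tendsto_zero_of_add_two_eq_sub_mul {ν : ℝ} (h0 : 0 < ν) (h1 : ν < 1) {e : ℕ → ℝ}
    (he : ∀ k, e (k + 2) = e (k + 1) - ν * e k) :
    Tendsto e atTop (𝓝 0) := by
  obtain ⟨r, hr, hr1, hs1⟩ := exists_mul_one_sub_eq_of_norm_lt_one h0 h1
  set E : ℕ → ℂ := fun k => e k
  -- the roots `r` and `1 - r` factor the recurrence into two first-order ones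
  have hz : ∀ k, E (k + 1) - (1 - r) * E k = r ^ k * (E 1 - (1 - r) * E 0) := by
    intro k
    induction k with
    | zero => simp
    | succ k ih =>
      have hk : E (k + 2) = E (k + 1) - ν * E k := by simp only [E, he]; push_cast; ring
      linear_combination r * ih + hk + E k * hr
  have hE : Tendsto E atTop (𝓝 0) :=
    tendsto_zero_of_succ_eq_mul_add_mul_pow hr1 hs1 fun k => by rw [← hz]; ring
  rwa [← Complex.ofReal_zero, tendsto_ofReal_iff] at hE

theorem stmt15 (αd βd εd αs βs εs lam : ℝ)
    (h1 : -1 < lam * (βd - βs)) (h2 : lam * (βd - βs) < 0)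
    (p qd qs : ℕ → ℝ)
    (hp : ∀ k, p (k + 1) = p k + lam * (qd k - qs k))
    (hqd : ∀ k, qd (k + 1) = αd + βd * p k + εd)
    (hqs : ∀ k, qs (k + 1) = αs + βs * p k + εs) :
    ∃ Pbar Qdbar Qsbar : ℝ,
      Tendsto (fun n : ℕ => (1 / (n : ℝ)) * ∑ k ∈ Finset.range n, p k)
        atTop (nhds Pbar) ∧
      Tendsto (fun n : ℕ => (1 / (n : ℝ)) * ∑ k ∈ Finset.range n, qd k)
        atTop (nhds Qdbar) ∧
      Tendsto (fun n : ℕ => (1 / (n : ℝ)) * ∑ k ∈ Finset.range n, qs k)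
        atTop (nhds Qsbar) ∧
      Qdbar = αd + βd * Pbar + εd ∧ Qsbar = αs + βs * Pbar + εs ∧ Qdbar = Qsbar := by
  have hβ : βd - βs ≠ 0 := right_ne_zero_of_mul h2.ne
  obtain ⟨P, hP⟩ : ∃ P, αd + βd * P + εd = αs + βs * P + εs :=
    ⟨(αs + εs - αd - εd) / (βd - βs), by field_simp; ring⟩
  have hdev : Tendsto (fun k => p k - P) atTop (𝓝 0) := by
    refine tendsto_zero_of_add_two_eq_sub_mul (ν := -(lam * (βd - βs))) (by linarith)
      (by linarith) fun k => ?_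
    linear_combination hp (k + 1) + lam * (hqd k - hqs k + hP)
  have hp' : Tendsto p atTop (𝓝 P) := by simpa using hdev.add_const P
  have hqd' : Tendsto qd atTop (𝓝 (αd + βd * P + εd)) :=
    (tendsto_add_atTop_iff_nat 1).1 <| by
      simpa only [hqd] using ((hp'.const_mul βd).const_add αd).add_const εd
  have hqs' : Tendsto qs atTop (𝓝 (αs + βs * P + εs)) :=
    (tendsto_add_atTop_iff_nat 1).1 <| by
      simpa only [hqs] using ((hp'.const_mul βs).const_add αs).add_const εs
  refine ⟨P, _, _, ?_, ?_, ?_, rfl, rfl, hP⟩ <;> simpa only [one_div] using Tendsto.cesaro ‹_›
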